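/- arXiv:1811.02180 — 5 statements merged into one kernel-verified Lean document; each statement's English description precedes it below -/
import Mathlib

section
/- Define k : ℂ² × ℝ → ℂ² × ℝ by k(α, β, h) = ((α(h−1) + 480(h−2))/(h−3), ((h−3)²(hβ − 746496) + (α + 120(h−1))²)/((h−4)(h−3)²), h − 2). Then for every n ≥ 0 the n-fold iterate satisfies kⁿ(α, β, h) = ((α(h−1) + 480n(h−n−1))/(h−2n−1), n(h−n−1)(α + 120(h−1))²/((h−2n)(h−2n−1)²(h−2n−2)) + (h(h−2)β − 746496n(h−n−1))/((h−2n)(h−2n−2)), h − 2n), provided all intermediate denominators are nonzero. -/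
/-! Induction on `n`: one application of `k` carries the closed form at `n` to the closed form
at `n + 1`. This is an identity of rational functions in `h` once the denominators
`h - 2n - i` (`0 ≤ i ≤ 4`) are cleared, and these are nonzero exactly when `h` avoids the
integers `0, 1, …, 2n + 2`. -/

noncomputable def k : ℂ × ℂ × ℝ → ℂ × ℂ × ℝ :=
  fun p =>
    let α := p.1
    let β := p.2.1
    let h : ℂ := (p.2.2 : ℝ)
    ((α * (h - 1) + 480 * (h - 2)) / (h - 3),
     ((h - 3) ^ 2 * (h * β - 746496) + (α + 120 * (h - 1)) ^ 2) / ((h - 4) * (h - 3) ^ 2),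
     p.2.2 - 2)

noncomputable def kClosedForm (α β : ℂ) (h : ℝ) (n : ℕ) : ℂ × ℂ × ℝ :=
  ((α * ((h : ℂ) - 1) + 480 * n * ((h : ℂ) - n - 1)) / ((h : ℂ) - 2 * n - 1),
   (n : ℂ) * ((h : ℂ) - n - 1) * (α + 120 * ((h : ℂ) - 1)) ^ 2 /
      (((h : ℂ) - 2 * n) * ((h : ℂ) - 2 * n - 1) ^ 2 * ((h : ℂ) - 2 * n - 2)) +
    ((h : ℂ) * ((h : ℂ) - 2) * β - 746496 * n * ((h : ℂ) - n - 1)) /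
      (((h : ℂ) - 2 * n) * ((h : ℂ) - 2 * n - 2)),
   h - 2 * n)

theorem kClosedForm_zero (α β : ℂ) {h : ℝ} (h0 : (h : ℂ) ≠ 0) (h1 : (h : ℂ) ≠ 1)
    (h2 : (h : ℂ) ≠ 2) : kClosedForm α β h 0 = (α, β, h) := by
  have h1' : (h : ℂ) - 1 ≠ 0 := sub_ne_zero.2 h1
  have h2' : (h : ℂ) - 2 ≠ 0 := sub_ne_zero.2 h2
  simp only [kClosedForm, Nat.cast_zero, mul_zero, zero_mul, sub_zero, add_zero, zero_div,
    zero_add, Prod.mk.injEq, and_true]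
  constructor <;> field_simp

theorem k_kClosedForm (α β : ℂ) {h : ℝ} {n : ℕ}
    (havoid : ∀ i : ℕ, 2 * n ≤ i → i ≤ 2 * n + 4 → (h : ℂ) ≠ i) :
    k (kClosedForm α β h n) = kClosedForm α β h (n + 1) := by
  have hne (m i : ℕ) (hm : n ≤ m) (hi : 2 * m + i ≤ 2 * n + 4) : (h : ℂ) - 2 * m - i ≠ 0 := by
    rw [sub_sub, sub_ne_zero]
    exact_mod_cast havoid (2 * m + i) (by omega) hi
  have e0 := hne n 0 le_rfl (by omega)
  have e1 := hne n 1 le_rfl (by omega)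
  have e2 := hne n 2 le_rfl (by omega)
  have e3 := hne n 3 le_rfl (by omega)
  have e4 := hne n 4 le_rfl (by omega)
  have f0 := hne (n + 1) 0 (by omega) (by omega)
  have f1 := hne (n + 1) 1 (by omega) (by omega)
  have f2 := hne (n + 1) 2 (by omega) (by omega)
  push_cast at e0 e1 e2 e3 e4 f0 f1 f2
  simp only [sub_zero] at e0 f0
  simp only [k, kClosedForm, Prod.mk.injEq]
  push_cast
  refine ⟨?_, ?_, by ring⟩
  · rw [div_mul_cancel₀ _ e1, div_eq_div_iff e3 f1]
    ring
  · field_simp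
    ring

theorem iterate_k_eq_kClosedForm (α β : ℂ) {h : ℝ} {n : ℕ}
    (havoid : ∀ i : ℕ, i ≤ 2 * n + 2 → (h : ℂ) ≠ i) :
    k^[n] (α, β, h) = kClosedForm α β h n := by
  induction n with
  | zero =>
    exact (kClosedForm_zero α β (by exact_mod_cast havoid 0 (by omega))
      (by exact_mod_cast havoid 1 (by omega)) (by exact_mod_cast havoid 2 (by omega))).symm
  | succ n ih =>
    rw [Function.iterate_succ_apply', ih fun i hi => havoid i (by omega)]
    exact k_kClosedForm α β fun i _ hi => havoid i (by omega)

theorem ofReal_ne_natCast_of_forall_le {h : ℝ} {n : ℕ}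
    (hden : ∀ j : ℕ, j ≤ n → (h - 2 * j ≠ 0 ∧ h - 2 * j - 1 ≠ 0 ∧ h - 2 * j - 2 ≠ 0))
    (i : ℕ) (hi : i ≤ 2 * n + 2) : (h : ℂ) ≠ i := by
  rw [Ne, ← Complex.ofReal_natCast, Complex.ofReal_inj]
  rintro rfl
  obtain ⟨j, rfl | rfl⟩ := Nat.even_or_odd' i
  · rcases Nat.lt_or_ge n j with hj | hj
    · obtain rfl : j = n + 1 := by omega
      exact (hden n le_rfl).2.2 (by push_cast; ring)
    · exact (hden j hj).1 (by push_cast; ring)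
  · exact (hden j (by omega)).2.1 (by push_cast; ring)

theorem stmt_2 (α β : ℂ) (h : ℝ) (n : ℕ)
    (hden : ∀ j : ℕ, j ≤ n →
      (h - 2 * j ≠ 0 ∧ h - 2 * j - 1 ≠ 0 ∧ h - 2 * j - 2 ≠ 0)) :
    k^[n] (α, β, h) =
      ((α * ((h : ℂ) - 1) + 480 * n * ((h : ℂ) - n - 1)) / ((h : ℂ) - 2 * n - 1),
       (n : ℂ) * ((h : ℂ) - n - 1) * (α + 120 * ((h : ℂ) - 1)) ^ 2 /
          (((h : ℂ) - 2 * n) * ((h : ℂ) - 2 * n - 1) ^ 2 * ((h : ℂ) - 2 * n - 2)) +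
        ((h : ℂ) * ((h : ℂ) - 2) * β - 746496 * n * ((h : ℂ) - n - 1)) /
          (((h : ℂ) - 2 * n) * ((h : ℂ) - 2 * n - 2)),
       h - 2 * n) :=
  iterate_k_eq_kClosedForm α β (ofReal_ne_natCast_of_forall_le hden)
end

section
/- Let h < 0, β > 1, and α be real numbers, and let n be a positive integer with n > |α − 120(1−h)|·(1−h)/860. Then n(h−n−1)(α+120(h−1))² + (h−2n−1)²·(h(h−2)β − 746496·n(h−n−1)) > (h−2n)(h−2n−1)²(h−2n−2), i.e. writing βₙ = n(h−n−1)(α+120(h−1))²/((h−2n)(h−2n−1)²(h−2n−2)) + (h(h−2)β − 746496n(h−n−1))/((h−2n)(h−2n−2)), one has |βₙ| > 1. -/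
set_option maxHeartbeats 1600000 in
theorem stmt_3 (h β α : ℝ) (hh : h < 0) (hβ : 1 < β) (n : ℕ) (hn : 0 < n)
    (hbig : (n : ℝ) > |α - 120 * (1 - h)| * (1 - h) / 860) :
    (n : ℝ) * (h - n - 1) * (α + 120 * (h - 1)) ^ 2 +
        (h - 2 * n - 1) ^ 2 * (h * (h - 2) * β - 746496 * n * (h - n - 1)) >
      (h - 2 * n) * (h - 2 * n - 1) ^ 2 * (h - 2 * n - 2) ∧
    |(n : ℝ) * (h - n - 1) * (α + 120 * (h - 1)) ^ 2 /
          ((h - 2 * n) * (h - 2 * n - 1) ^ 2 * (h - 2 * n - 2)) +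
        (h * (h - 2) * β - 746496 * n * (h - n - 1)) /
          ((h - 2 * n) * (h - 2 * n - 2))| > 1 := by
  have hn1 : (1:ℝ) ≤ (n:ℝ) := by exact_mod_cast hn
  -- bound on s = α - 120(1-h)
  have habs : |α - 120 * (1 - h)| < 860 * n := by
    have h860 : (0:ℝ) < 860 := by norm_num
    have h1 : |α - 120 * (1 - h)| * (1 - h) < (n:ℝ) * 860 := (div_lt_iff₀ h860).mp hbig
    nlinarith [abs_nonneg (α - 120 * (1 - h))]
  have hs2 : (α + 120 * (h - 1)) ^ 2 < 739600 * (n:ℝ)^2 := by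
    have h1 : (α + 120 * (h - 1)) = (α - 120 * (1 - h)) := by ring
    rw [h1]
    nlinarith [sq_abs (α - 120 * (1 - h)), abs_nonneg (α - 120 * (1 - h)), habs]
  have hA : (0:ℝ) < (n:ℝ) * ((n:ℝ) + 1 - h) := by nlinarith
  have hq : (2*(n:ℝ)+1)^2 ≤ (h - 2*n - 1)^2 := by nlinarith
  have key : 746492 * ((n:ℝ) * ((n:ℝ)+1-h)) * (h - 2*n - 1)^2
      - (n:ℝ) * ((n:ℝ)+1-h) * (α + 120 * (h - 1)) ^ 2 > 0 := by
    have h1 : (n:ℝ) * ((n:ℝ)+1-h) * (α + 120 * (h - 1)) ^ 2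
        < (n:ℝ) * ((n:ℝ)+1-h) * (739600 * (n:ℝ)^2) :=
      mul_lt_mul_of_pos_left hs2 hA
    have h2 : (n:ℝ) * ((n:ℝ)+1-h) * (4*(n:ℝ)^2) ≤ (n:ℝ) * ((n:ℝ)+1-h) * (h - 2*n - 1)^2 := by
      have : (4*(n:ℝ)^2) ≤ (h - 2*n - 1)^2 := by nlinarith
      exact mul_le_mul_of_nonneg_left this hA.le
    nlinarith [h1, h2, mul_nonneg hA.le (sq_nonneg (n:ℝ))]
  have hβ0 : (0:ℝ) ≤ (h - 2*n - 1)^2 * (h * (h-2)) * (β - 1) := by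
    have hhh : (0:ℝ) < h * (h - 2) := by nlinarith
    have h3 : (0:ℝ) ≤ β - 1 := by linarith
    calc (0:ℝ) ≤ (h - 2*(n:ℝ) - 1)^2 * (h * (h-2)) * (β - 1) :=
          mul_nonneg (mul_nonneg (sq_nonneg _) hhh.le) h3
      _ = _ := by norm_num
  have part1 : (n : ℝ) * (h - n - 1) * (α + 120 * (h - 1)) ^ 2 +
        (h - 2 * n - 1) ^ 2 * (h * (h - 2) * β - 746496 * n * (h - n - 1)) >
      (h - 2 * n) * (h - 2 * n - 1) ^ 2 * (h - 2 * n - 2) := by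
    nlinarith [key, hβ0]
  refine ⟨part1, ?_⟩
  have hneg1 : h - 2*(n:ℝ) < 0 := by linarith
  have hneg2 : h - 2*(n:ℝ) - 2 < 0 := by linarith
  have hneg3 : h - 2*(n:ℝ) - 1 < 0 := by linarith
  have hq2 : (0:ℝ) < (h - 2*(n:ℝ) - 1)^2 := by nlinarith [hq, hn1]
  have hD : (0:ℝ) < (h - 2*(n:ℝ)) * (h - 2*(n:ℝ) - 2) := by
    nlinarith [mul_pos (neg_pos.mpr hneg1) (neg_pos.mpr hneg2)]
  have hP : (0:ℝ) < (h - 2 * n) * (h - 2 * n - 1) ^ 2 * (h - 2 * n - 2) := by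
    nlinarith [mul_pos hD hq2]
  have hDne : ((h - 2*(n:ℝ)) * (h - 2*(n:ℝ) - 2)) ≠ 0 := ne_of_gt hD
  have hq2ne : ((h - 2*(n:ℝ) - 1)^2) ≠ 0 := ne_of_gt hq2
  have hX : (n : ℝ) * (h - n - 1) * (α + 120 * (h - 1)) ^ 2 /
          ((h - 2 * n) * (h - 2 * n - 1) ^ 2 * (h - 2 * n - 2)) +
        (h * (h - 2) * β - 746496 * n * (h - n - 1)) /
          ((h - 2 * n) * (h - 2 * n - 2)) =
      ((n : ℝ) * (h - n - 1) * (α + 120 * (h - 1)) ^ 2 +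
        (h - 2 * n - 1) ^ 2 * (h * (h - 2) * β - 746496 * n * (h - n - 1))) /
      ((h - 2 * n) * (h - 2 * n - 1) ^ 2 * (h - 2 * n - 2)) := by
    rw [div_add_div _ _ (ne_of_gt hP) hDne, div_eq_div_iff (by positivity) (ne_of_gt hP)]
    ring
  rw [hX]
  have h2 : 1 < ((n : ℝ) * (h - n - 1) * (α + 120 * (h - 1)) ^ 2 +
        (h - 2 * n - 1) ^ 2 * (h * (h - 2) * β - 746496 * n * (h - n - 1))) /
      ((h - 2 * n) * (h - 2 * n - 1) ^ 2 * (h - 2 * n - 2)) :=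
    (one_lt_div hP).mpr part1
  calc (1:ℝ) < _ := h2
    _ ≤ |_| := le_abs_self _
end

section
/- A codeword (α, β, γ, δ) ∈ ℤ₂⁶⁴ with α, β, γ, δ ∈ ℤ₂¹⁶ lies in RM(4,6) = RM(1,6)^⊥ if and only if α + β + γ + δ ∈ RM(2,4) = RM(1,4)^⊥ and wt(α) ≡ wt(β) ≡ wt(γ) ≡ wt(δ) (mod 2). -/
def wt {n : ℕ} (v : Fin n → ZMod 2) : ℕ :=
  (Finset.univ.filter fun i => v i ≠ 0).card

def g1 : Fin 16 → ZMod 2 := fun _ => 1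
def g2 : Fin 16 → ZMod 2 := fun i => if i.val < 8 then 1 else 0
def g3 : Fin 16 → ZMod 2 := fun i => if i.val % 8 < 4 then 1 else 0
def g4 : Fin 16 → ZMod 2 := fun i => if i.val % 4 < 2 then 1 else 0
def g5 : Fin 16 → ZMod 2 := fun i => if i.val % 2 = 0 then 1 else 0

/-- The first-order Reed-Muller code RM(1,4) of length 16. -/
def RM14 : Submodule (ZMod 2) (Fin 16 → ZMod 2) :=
  Submodule.span (ZMod 2) {g1, g2, g3, g4, g5}

/-- Four copies of a length-16 word, concatenated. -/
def quad (a : Fin 16 → ZMod 2) : Fin 64 → ZMod 2 :=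
  fun i => a ⟨i.val % 16, Nat.mod_lt _ (by norm_num)⟩

def γ6 : Fin 64 → ZMod 2 := fun i => if i.val / 16 = 1 ∨ i.val / 16 = 3 then 1 else 0
def γ7 : Fin 64 → ZMod 2 := fun i => if 32 ≤ i.val then 1 else 0

/-- The first-order Reed-Muller code RM(1,6) of length 64. -/
def RM16 : Submodule (ZMod 2) (Fin 64 → ZMod 2) :=
  Submodule.span (ZMod 2) ({v | ∃ a ∈ RM14, v = quad a} ∪ {γ6, γ7})

/-- The dual of a binary code with respect to the standard bilinear form. -/
def dual {n : ℕ} (C : Submodule (ZMod 2) (Fin n → ZMod 2)) :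
    Set (Fin n → ZMod 2) :=
  {v | ∀ w ∈ C, ∑ i, v i * w i = 0}

/-- Concatenation of four length-16 words into a length-64 word. -/
def concat4 (a b c d : Fin 16 → ZMod 2) : Fin 64 → ZMod 2 := fun i =>
  if h : i.val < 16 then a ⟨i.val, h⟩
  else if h' : i.val < 32 then b ⟨i.val - 16, by omega⟩
  else if h'' : i.val < 48 then c ⟨i.val - 32, by omega⟩
  else d ⟨i.val - 48, by omega⟩

lemma mem_dual_span {n : ℕ} (S : Set (Fin n → ZMod 2)) (v : Fin n → ZMod 2) :
    v ∈ dual (Submodule.span (ZMod 2) S) ↔ ∀ w ∈ S, ∑ i, v i * w i = 0 := by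
  constructor
  · intro h w hw
    exact h w (Submodule.subset_span hw)
  · intro h w hw
    induction hw using Submodule.span_induction with
    | mem x hx => exact h x hx
    | zero => simp
    | add x y _ _ hx hy =>
      simp only [Pi.add_apply, mul_add, Finset.sum_add_distrib, hx, hy, add_zero]
    | smul c x _ hx =>
      simp only [Pi.smul_apply, smul_eq_mul, mul_left_comm, ← Finset.mul_sum, hx, mul_zero]

lemma sum_eq_wt {n : ℕ} (v : Fin n → ZMod 2) : ∑ i, v i = (wt v : ZMod 2) := by
  have key : ∀ x : ZMod 2, x ≠ 0 → x = 1 := by decide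
  rw [wt, ← Finset.sum_filter_ne_zero,
    Finset.sum_congr rfl (fun i hi => key _ (Finset.mem_filter.mp hi).2)]
  simp

lemma concat4_ap0 (a b c d : Fin 16 → ZMod 2) (n : ℕ) (h : n < 64) (hn : n < 16) :
    concat4 a b c d ⟨n, h⟩ = a ⟨n, hn⟩ := dif_pos hn

lemma concat4_ap1 (a b c d : Fin 16 → ZMod 2) (n : ℕ) (h : n < 64) (h1 : ¬ n < 16)
    (h2 : n < 32) : concat4 a b c d ⟨n, h⟩ = b ⟨n - 16, by omega⟩ := by
  unfold concat4; rw [dif_neg h1, dif_pos h2]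

lemma concat4_ap2 (a b c d : Fin 16 → ZMod 2) (n : ℕ) (h : n < 64) (h1 : ¬ n < 16)
    (h2 : ¬ n < 32) (h3 : n < 48) : concat4 a b c d ⟨n, h⟩ = c ⟨n - 32, by omega⟩ := by
  unfold concat4; rw [dif_neg h1, dif_neg h2, dif_pos h3]

lemma concat4_ap3 (a b c d : Fin 16 → ZMod 2) (n : ℕ) (h : n < 64) (h1 : ¬ n < 16)
    (h2 : ¬ n < 32) (h3 : ¬ n < 48) : concat4 a b c d ⟨n, h⟩ = d ⟨n - 48, by omega⟩ := by
  unfold concat4; rw [dif_neg h1, dif_neg h2, dif_neg h3]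

set_option maxHeartbeats 1000000 in
lemma sum_concat4 (a b c d : Fin 16 → ZMod 2) (w : Fin 64 → ZMod 2) :
    ∑ i, concat4 a b c d i * w i =
      (∑ j : Fin 16, a j * w ⟨j.val, by omega⟩) +
      (∑ j : Fin 16, b j * w ⟨16 + j.val, by omega⟩) +
      (∑ j : Fin 16, c j * w ⟨32 + j.val, by omega⟩) +
      (∑ j : Fin 16, d j * w ⟨48 + j.val, by omega⟩) := by
  set f : ℕ → ZMod 2 :=
    fun i => if h : i < 64 then concat4 a b c d ⟨i, h⟩ * w ⟨i, h⟩ else 0 with hf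
  have h0 : ∑ i, concat4 a b c d i * w i = ∑ i ∈ Finset.range 64, f i := by
    rw [← Fin.sum_univ_eq_sum_range]
    exact Finset.sum_congr rfl fun i _ => by simp [hf, i.isLt]
  rw [h0, Finset.range_eq_Ico]
  rw [← Finset.sum_Ico_consecutive f (by omega : (0:ℕ) ≤ 16) (by omega : (16:ℕ) ≤ 64)]
  rw [← Finset.sum_Ico_consecutive f (by omega : (16:ℕ) ≤ 32) (by omega : (32:ℕ) ≤ 64)]
  rw [← Finset.sum_Ico_consecutive f (by omega : (32:ℕ) ≤ 48) (by omega : (48:ℕ) ≤ 64)]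
  rw [Finset.sum_Ico_eq_sum_range, Finset.sum_Ico_eq_sum_range,
      Finset.sum_Ico_eq_sum_range, Finset.sum_Ico_eq_sum_range]
  norm_num
  rw [← Fin.sum_univ_eq_sum_range f 16,
      ← Fin.sum_univ_eq_sum_range (fun i => f (16 + i)) 16,
      ← Fin.sum_univ_eq_sum_range (fun i => f (32 + i)) 16,
      ← Fin.sum_univ_eq_sum_range (fun i => f (48 + i)) 16]
  have e1 : ∀ j : Fin 16, f j.val = a j * w ⟨j.val, by omega⟩ := fun j => by
    simp only [hf]; rw [dif_pos (by omega : j.val < 64)]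
    exact congrArg₂ (· * ·) (concat4_ap0 a b c d j.val (by omega) j.isLt) rfl
  have e2 : ∀ j : Fin 16, f (16 + j.val) = b j * w ⟨16 + j.val, by omega⟩ := fun j => by
    simp only [hf]; rw [dif_pos (by omega : 16 + j.val < 64)]
    exact congrArg₂ (· * ·) ((concat4_ap1 a b c d (16 + j.val) (by omega) (by omega) (by omega)).trans
      (congrArg b (Fin.ext (by simp only [Fin.val_mk]; omega)))) rfl
  have e3 : ∀ j : Fin 16, f (32 + j.val) = c j * w ⟨32 + j.val, by omega⟩ := fun j => by
    simp only [hf]; rw [dif_pos (by omega : 32 + j.val < 64)]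
    exact congrArg₂ (· * ·) ((concat4_ap2 a b c d (32 + j.val) (by omega) (by omega) (by omega) (by omega)).trans
      (congrArg c (Fin.ext (by simp only [Fin.val_mk]; omega)))) rfl
  have e4 : ∀ j : Fin 16, f (48 + j.val) = d j * w ⟨48 + j.val, by omega⟩ := fun j => by
    simp only [hf]; rw [dif_pos (by omega : 48 + j.val < 64)]
    exact congrArg₂ (· * ·) ((concat4_ap3 a b c d (48 + j.val) (by omega) (by omega) (by omega) (by omega)).trans
      (congrArg d (Fin.ext (by simp only [Fin.val_mk]; omega)))) rfl
  rw [Finset.sum_congr rfl fun j _ => e1 j, Finset.sum_congr rfl fun j _ => e2 j,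
      Finset.sum_congr rfl fun j _ => e3 j, Finset.sum_congr rfl fun j _ => e4 j]
  ring

lemma quad_eq (x : Fin 16 → ZMod 2) (n : ℕ) (h : n < 64) (j : Fin 16)
    (hn : n % 16 = j.val) : quad x ⟨n, h⟩ = x j := congrArg x (Fin.ext hn)

lemma hquad (a b c d x : Fin 16 → ZMod 2) :
    ∑ i, concat4 a b c d i * quad x i = ∑ j, (a + b + c + d) j * x j := by
  rw [sum_concat4]
  have e1 : ∀ j : Fin 16, quad x ⟨j.val, (by omega : j.val < 64)⟩ = x j :=
    fun j => quad_eq x j.val (by omega) j (by omega)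
  have e2 : ∀ j : Fin 16, quad x ⟨16 + j.val, (by omega : 16 + j.val < 64)⟩ = x j :=
    fun j => quad_eq x (16 + j.val) (by omega) j (by omega)
  have e3 : ∀ j : Fin 16, quad x ⟨32 + j.val, (by omega : 32 + j.val < 64)⟩ = x j :=
    fun j => quad_eq x (32 + j.val) (by omega) j (by omega)
  have e4 : ∀ j : Fin 16, quad x ⟨48 + j.val, (by omega : 48 + j.val < 64)⟩ = x j :=
    fun j => quad_eq x (48 + j.val) (by omega) j (by omega)
  simp only [e1, e2, e3, e4, Pi.add_apply]
  rw [← Finset.sum_add_distrib, ← Finset.sum_add_distrib, ← Finset.sum_add_distrib]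
  exact Finset.sum_congr rfl fun j _ => by ring

lemma hγ6 (a b c d : Fin 16 → ZMod 2) :
    ∑ i, concat4 a b c d i * γ6 i = (wt b : ZMod 2) + wt d := by
  rw [sum_concat4]
  have e1 : ∀ j : Fin 16, γ6 ⟨j.val, (by omega : j.val < 64)⟩ = 0 := fun j => by
    simp only [γ6, Fin.val_mk]; rw [if_neg (by omega)]
  have e2 : ∀ j : Fin 16, γ6 ⟨16 + j.val, (by omega : 16 + j.val < 64)⟩ = 1 := fun j => by
    simp only [γ6, Fin.val_mk]; rw [if_pos (by omega)]
  have e3 : ∀ j : Fin 16, γ6 ⟨32 + j.val, (by omega : 32 + j.val < 64)⟩ = 0 := fun j => by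
    simp only [γ6, Fin.val_mk]; rw [if_neg (by omega)]
  have e4 : ∀ j : Fin 16, γ6 ⟨48 + j.val, (by omega : 48 + j.val < 64)⟩ = 1 := fun j => by
    simp only [γ6, Fin.val_mk]; rw [if_pos (by omega)]
  simp only [e1, e2, e3, e4, mul_zero, mul_one, Finset.sum_const_zero, add_zero, zero_add]
  rw [sum_eq_wt, sum_eq_wt]

lemma hγ7 (a b c d : Fin 16 → ZMod 2) :
    ∑ i, concat4 a b c d i * γ7 i = (wt c : ZMod 2) + wt d := by
  rw [sum_concat4]
  have e1 : ∀ j : Fin 16, γ7 ⟨j.val, (by omega : j.val < 64)⟩ = 0 := fun j => by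
    simp only [γ7, Fin.val_mk]; rw [if_neg (by omega)]
  have e2 : ∀ j : Fin 16, γ7 ⟨16 + j.val, (by omega : 16 + j.val < 64)⟩ = 0 := fun j => by
    simp only [γ7, Fin.val_mk]; rw [if_neg (by omega)]
  have e3 : ∀ j : Fin 16, γ7 ⟨32 + j.val, (by omega : 32 + j.val < 64)⟩ = 1 := fun j => by
    simp only [γ7, Fin.val_mk]; rw [if_pos (by omega)]
  have e4 : ∀ j : Fin 16, γ7 ⟨48 + j.val, (by omega : 48 + j.val < 64)⟩ = 1 := fun j => by
    simp only [γ7, Fin.val_mk]; rw [if_pos (by omega)]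
  simp only [e1, e2, e3, e4, mul_zero, mul_one, Finset.sum_const_zero, add_zero, zero_add]
  rw [sum_eq_wt, sum_eq_wt]

theorem stmt_11 (a b c d : Fin 16 → ZMod 2) :
    concat4 a b c d ∈ dual RM16 ↔
      (a + b + c + d ∈ dual RM14 ∧
        wt a % 2 = wt b % 2 ∧ wt b % 2 = wt c % 2 ∧ wt c % 2 = wt d % 2) := by
  have key : concat4 a b c d ∈ dual RM16 ↔
      ∀ w ∈ ({v | ∃ x ∈ RM14, v = quad x} ∪ {γ6, γ7} : Set (Fin 64 → ZMod 2)),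
        ∑ i, concat4 a b c d i * w i = 0 := mem_dual_span _ _
  have main : concat4 a b c d ∈ dual RM16 ↔
      ((a + b + c + d) ∈ dual RM14 ∧ (wt b : ZMod 2) + wt d = 0 ∧ (wt c : ZMod 2) + wt d = 0) := by
    rw [key]
    constructor
    · intro h
      refine ⟨fun x hx => ?_, ?_, ?_⟩
      · have := h (quad x) (Or.inl ⟨x, hx, rfl⟩)
        rwa [hquad a b c d x] at this
      · have := h γ6 (Or.inr (by left; rfl))
        rwa [hγ6] at this
      · have := h γ7 (Or.inr (by right; rfl))
        rwa [hγ7] at this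
    · rintro ⟨h1, h2, h3⟩ w hw
      rcases hw with ⟨x, hx, rfl⟩ | hw
      · rw [hquad a b c d x]; exact h1 x hx
      · rcases hw with h | h
        · rw [h, hγ6]; exact h2
        · rw [Set.mem_singleton_iff.mp h, hγ7]; exact h3
  rw [main]
  have hcast : ∀ m k : ℕ, m % 2 = k % 2 ↔ (m : ZMod 2) = k := by
    intro m k
    rw [ZMod.natCast_eq_natCast_iff]
    exact Iff.rfl
  constructor
  · rintro ⟨h1, h2, h3⟩
    have hsum : (wt a : ZMod 2) + wt b + wt c + wt d = 0 := by
      have hg : g1 ∈ RM14 := Submodule.subset_span (by left; rfl)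
      have := h1 g1 hg
      simp only [g1, mul_one, Pi.add_apply] at this
      rw [Finset.sum_add_distrib, Finset.sum_add_distrib, Finset.sum_add_distrib,
        sum_eq_wt, sum_eq_wt, sum_eq_wt, sum_eq_wt] at this
      exact this
    refine ⟨h1, ?_, ?_, ?_⟩ <;> rw [hcast] <;>
      (revert hsum h2 h3;
       generalize (wt a : ZMod 2) = A; generalize (wt b : ZMod 2) = B;
       generalize (wt c : ZMod 2) = C; generalize (wt d : ZMod 2) = D;
       revert A B C D; decide)
  · rintro ⟨h1, h2, h3, h4⟩
    rw [hcast] at h2 h3 h4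
    have hsum : (wt a : ZMod 2) + wt b + wt c + wt d = 0 := by
      rw [h2, h3, h4]; ring_nf
      generalize (wt d : ZMod 2) = D; revert D; decide
    refine ⟨h1, ?_, ?_⟩ <;>
      (revert hsum h2 h3 h4;
       generalize (wt a : ZMod 2) = A; generalize (wt b : ZMod 2) = B;
       generalize (wt c : ZMod 2) = C; generalize (wt d : ZMod 2) = D;
       revert A B C D; decide)
end

section
/- Let α = (0110 1100 1010 0000) ∈ ℤ₂¹⁶ (a weight-6 codeword of RM(2,4)) and ξ = (α, α, α, αᶜ) ∈ ℤ₂⁶⁴ where αᶜ = 1¹⁶ + α. Then the coset ξ + RM(1,6) has weight enumerator 64x²⁸ + 64x³⁶; i.e., exactly 64 of its 128 elements have weight 28 and the other 64 have weight 36. -/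
def α0 : Fin 16 → ZMod 2 := ![0,1,1,0, 1,1,0,0, 1,0,1,0, 0,0,0,0]

def ξ0 : Fin 64 → ZMod 2 := concat4 α0 α0 α0 ((fun _ => 1) + α0)

theorem wt_eq_sum_blocks {m n : ℕ} (v : Fin (m * n) → ZMod 2) :
    wt v = ∑ k, wt fun j => v (finProdFinEquiv (k, j)) := by
  simp only [wt, Finset.card_filter]
  rw [← Fintype.sum_prod_type', ← finProdFinEquiv.sum_comp]

theorem wt_add_const {n : ℕ} (u : Fin n → ZMod 2) (c : ZMod 2) :
    (wt fun j => u j + c) = if c = 0 then wt u else n - wt u := by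
  by_cases hc : c = 0
  · simp [hc]
  · have h : ∀ x : ZMod 2, x + c ≠ 0 ↔ ¬ x ≠ 0 := by revert c; decide
    simp only [wt, hc, if_false, h]
    rw [Finset.filter_not, Finset.card_sdiff_of_subset (Finset.filter_subset _ _), Finset.card_univ,
      Fintype.card_fin]

theorem wt_add_one {n : ℕ} (u : Fin n → ZMod 2) : wt (u + 1) = n - wt u :=
  wt_add_const u 1

-- `finProdFinEquiv_apply_val` specialised to `Fin 64`, which is not syntactically `Fin (4 * 16)`.
theorem finProdFinEquiv_val (k : Fin 4) (j : Fin 16) :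
    ((finProdFinEquiv (k, j) : Fin 64) : ℕ) = j + 16 * k :=
  finProdFinEquiv_apply_val (k, j)

theorem quad_apply_block (b : Fin 16 → ZMod 2) (k : Fin 4) (j : Fin 16) :
    quad b (finProdFinEquiv (k, j)) = b j := by
  simp only [quad, finProdFinEquiv_val]
  congr 1
  apply Fin.ext
  simp only
  omega

theorem γ6_apply_block (k : Fin 4) (j : Fin 16) :
    γ6 (finProdFinEquiv (k, j)) = ![0, 1, 0, 1] k := by
  simp only [γ6, finProdFinEquiv_val]
  fin_cases k <;> simp <;> omega

theorem γ7_apply_block (k : Fin 4) (j : Fin 16) :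
    γ7 (finProdFinEquiv (k, j)) = ![0, 0, 1, 1] k := by
  simp only [γ7, finProdFinEquiv_val]
  fin_cases k <;> simp [show (j : ℕ) < 32 by omega]

theorem ξ0_apply_block (k : Fin 4) (j : Fin 16) :
    ξ0 (finProdFinEquiv (k, j)) = α0 j + ![0, 0, 0, 1] k := by
  simp only [ξ0, concat4, finProdFinEquiv_val]
  fin_cases k <;> simp [add_comm] <;> split_ifs <;> first | omega | rfl

def rm14Basis : Fin 5 → Fin 16 → ZMod 2 := ![g1, g2, g3, g4, g5]

theorem RM14_eq_span_range : RM14 = Submodule.span (ZMod 2) (Set.range rm14Basis) := by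
  rw [RM14, rm14Basis]
  simp only [Matrix.range_cons, Matrix.range_empty, Set.union_empty, Set.singleton_union]

theorem linearIndependent_rm14Basis : LinearIndependent (ZMod 2) rm14Basis := by
  rw [Fintype.linearIndependent_iff]
  decide

theorem natCard_RM14 : Nat.card RM14 = 32 := by
  rw [Module.natCard_eq_pow_finrank (K := ZMod 2), Nat.card_zmod, RM14_eq_span_range,
    finrank_span_eq_card linearIndependent_rm14Basis]
  rfl

theorem wt_α0_add_of_mem_RM14 {b : Fin 16 → ZMod 2} (hb : b ∈ RM14) :
    wt (α0 + b) = 6 ∨ wt (α0 + b) = 10 := by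
  rw [RM14_eq_span_range, Submodule.mem_span_range_iff_exists_fun] at hb
  obtain ⟨c, rfl⟩ := hb
  revert c
  decide

def quadₗ : (Fin 16 → ZMod 2) →ₗ[ZMod 2] Fin 64 → ZMod 2 :=
  LinearMap.funLeft (ZMod 2) (ZMod 2) fun i : Fin 64 => ⟨i.val % 16, Nat.mod_lt _ (by norm_num)⟩

def rm16Word (b : Fin 16 → ZMod 2) (e6 e7 : ZMod 2) : Fin 64 → ZMod 2 :=
  quad b + e6 • γ6 + e7 • γ7

theorem mem_RM16_iff {β : Fin 64 → ZMod 2} :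
    β ∈ RM16 ↔ ∃ b ∈ RM14, ∃ e6 e7 : ZMod 2, rm16Word b e6 e7 = β := by
  have h : {v | ∃ a ∈ RM14, v = quad a} = quadₗ '' RM14 := by
    ext v
    simp only [Set.mem_ofPred_eq, Set.mem_image, SetLike.mem_coe, eq_comm]
    rfl
  rw [RM16, h, Submodule.span_union, Submodule.span_image, Submodule.span_eq]
  simp only [Submodule.mem_sup, Submodule.mem_map, Submodule.mem_span_pair, rm16Word]
  constructor
  · rintro ⟨_, ⟨b, hb, rfl⟩, _, ⟨e6, e7, rfl⟩, rfl⟩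
    exact ⟨b, hb, e6, e7, by rw [add_assoc]; rfl⟩
  · rintro ⟨b, hb, e6, e7, rfl⟩
    exact ⟨_, ⟨b, hb, rfl⟩, _, ⟨e6, e7, rfl⟩, by rw [add_assoc]; rfl⟩

theorem rm16Word_apply_block (b : Fin 16 → ZMod 2) (e6 e7 : ZMod 2) (k : Fin 4) (j : Fin 16) :
    rm16Word b e6 e7 (finProdFinEquiv (k, j)) = b j + ![0, e6, e7, e6 + e7] k := by
  simp only [rm16Word, Pi.add_apply, Pi.smul_apply, smul_eq_mul, quad_apply_block,
    γ6_apply_block, γ7_apply_block]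
  fin_cases k <;> simp [add_assoc]

theorem rm16Word_injective {b b' : Fin 16 → ZMod 2} {e6 e7 e6' e7' : ZMod 2}
    (h : rm16Word b e6 e7 = rm16Word b' e6' e7') : b = b' ∧ e6 = e6' ∧ e7 = e7' := by
  have hblock (k : Fin 4) (j : Fin 16) := congrFun h (finProdFinEquiv (k, j))
  simp only [rm16Word_apply_block] at hblock
  have hb : b = b' := funext fun j => by simpa using hblock 0 j
  subst hb
  exact ⟨rfl, by simpa using hblock 1 0, by simpa using hblock 2 0⟩

theorem natCard_RM16 : Nat.card RM16 = 128 := by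
  let param : RM14 × ZMod 2 × ZMod 2 → RM16 := fun p =>
    ⟨rm16Word p.1 p.2.1 p.2.2, mem_RM16_iff.2 ⟨p.1, p.1.2, p.2.1, p.2.2, rfl⟩⟩
  have hparam : Function.Bijective param := by
    refine ⟨fun p q h => ?_, fun β => ?_⟩
    · obtain ⟨h1, h2, h3⟩ := rm16Word_injective (Subtype.ext_iff.1 h)
      exact Prod.ext (Subtype.ext h1) (Prod.ext h2 h3)
    · obtain ⟨b, hb, e6, e7, h⟩ := mem_RM16_iff.1 β.2
      exact ⟨(⟨b, hb⟩, e6, e7), Subtype.ext h⟩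
  rw [← Nat.card_congr (Equiv.ofBijective param hparam), Nat.card_prod, Nat.card_prod,
    natCard_RM14, Nat.card_zmod]

theorem ξ0_add_rm16Word_apply_block (b : Fin 16 → ZMod 2) (e6 e7 : ZMod 2) (k : Fin 4)
    (j : Fin 16) :
    (ξ0 + rm16Word b e6 e7) (finProdFinEquiv (k, j)) =
      (α0 + b) j + ![0, e6, e7, 1 + e6 + e7] k := by
  simp only [Pi.add_apply, ξ0_apply_block, rm16Word_apply_block]
  fin_cases k <;> simp [add_assoc, add_left_comm, add_comm]

theorem wt_ξ0_add_of_mem_RM16 {β : Fin 64 → ZMod 2} (hβ : β ∈ RM16) :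
    wt (ξ0 + β) = 28 ∨ wt (ξ0 + β) = 36 := by
  obtain ⟨b, hb, e6, e7, rfl⟩ := mem_RM16_iff.1 hβ
  rw [wt_eq_sum_blocks (m := 4) (n := 16)]
  simp only [ξ0_add_rm16Word_apply_block, wt_add_const, Fin.sum_univ_four]
  clear hβ
  rcases wt_α0_add_of_mem_RM14 hb with h | h <;> rw [h] <;> revert e6 e7 <;> decide

def cosetOfWt (k : ℕ) : Set (Fin 64 → ZMod 2) :=
  {v | (∃ β ∈ RM16, v = ξ0 + β) ∧ wt v = k}

theorem one_mem_RM16 : (1 : Fin 64 → ZMod 2) ∈ RM16 :=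
  mem_RM16_iff.2 ⟨1, Submodule.subset_span (Set.mem_insert g1 _), 0, 0, by simp [rm16Word]; rfl⟩

theorem ncard_cosetOfWt_le (k : ℕ) : (cosetOfWt k).ncard ≤ (cosetOfWt (64 - k)).ncard := by
  refine Set.ncard_le_ncard_of_injOn (· + 1) ?_ (add_left_injective 1).injOn
  rintro _ ⟨⟨β, hβ, rfl⟩, rfl⟩
  exact ⟨⟨β + 1, RM16.add_mem hβ one_mem_RM16, add_assoc _ _ _⟩, wt_add_one _⟩

theorem ncard_coset : {v : Fin 64 → ZMod 2 | ∃ β ∈ RM16, v = ξ0 + β}.ncard = 128 := by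
  have h : {v | ∃ β ∈ RM16, v = ξ0 + β} = (ξ0 + ·) '' RM16 := by
    ext v
    constructor <;> rintro ⟨β, hβ, rfl⟩ <;> exact ⟨β, hβ, rfl⟩
  rw [h, Set.ncard_image_of_injective _ (add_right_injective ξ0), ← Nat.card_coe_set_eq,
    ← natCard_RM16]
  rfl

theorem ncard_cosetOfWt_28_add_ncard_cosetOfWt_36 :
    (cosetOfWt 28).ncard + (cosetOfWt 36).ncard = 128 := by
  have hsplit : cosetOfWt 28 ∪ cosetOfWt 36 = {v | ∃ β ∈ RM16, v = ξ0 + β} := by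
    ext v
    constructor
    · rintro (⟨hv, -⟩ | ⟨hv, -⟩) <;> exact hv
    · rintro ⟨β, hβ, rfl⟩
      exact (wt_ξ0_add_of_mem_RM16 hβ).imp (⟨⟨β, hβ, rfl⟩, ·⟩) (⟨⟨β, hβ, rfl⟩, ·⟩)
  have hdisj : Disjoint (cosetOfWt 28) (cosetOfWt 36) :=
    Set.disjoint_left.2 fun v h28 h36 => by simp_all [cosetOfWt]
  rw [← Set.ncard_union_eq hdisj, hsplit, ncard_coset]

theorem stmt_13 :
    Set.ncard {v : Fin 64 → ZMod 2 | (∃ β ∈ RM16, v = ξ0 + β) ∧ wt v = 28} = 64 ∧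
    Set.ncard {v : Fin 64 → ZMod 2 | (∃ β ∈ RM16, v = ξ0 + β) ∧ wt v = 36} = 64 ∧
    ∀ β ∈ RM16, wt (ξ0 + β) = 28 ∨ wt (ξ0 + β) = 36 := by
  have hsum := ncard_cosetOfWt_28_add_ncard_cosetOfWt_36
  have h₁ : (cosetOfWt 28).ncard ≤ (cosetOfWt 36).ncard := ncard_cosetOfWt_le 28
  have h₂ : (cosetOfWt 36).ncard ≤ (cosetOfWt 28).ncard := ncard_cosetOfWt_le 36
  exact ⟨show (cosetOfWt 28).ncard = 64 by omega, show (cosetOfWt 36).ncard = 64 by omega,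
    fun β hβ => wt_ξ0_add_of_mem_RM16 hβ⟩
end

section
/- Let h < 0, β > 1, α ∈ ℝ, and for n ≥ 1 define r(n) = 2985968n⁴ + 5971936(1−h)n³ + (3732456(1−h)² + 4)n² + (746488(1−h)³ + 4(1−h))n + 4(−h)n(2−h)(1−h+n) + (−h)(2−h)(β−1)(1−h+2n)² − (1−h+n)·n·(α − 120(1−h))². If n > |α − 120(1−h)|·(1−h)/860 then r(n) > 0. -/
theorem stmt_19 (h β α : ℝ) (hh : h < 0) (hβ : 1 < β) (n : ℕ) (hn : 1 ≤ n)
    (hbig : (n : ℝ) > |α - 120 * (1 - h)| * (1 - h) / 860) :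
    2985968 * (n : ℝ) ^ 4 + 5971936 * (1 - h) * n ^ 3 +
        (3732456 * (1 - h) ^ 2 + 4) * n ^ 2 +
        (746488 * (1 - h) ^ 3 + 4 * (1 - h)) * n +
        4 * (-h) * n * (2 - h) * (1 - h + n) +
        (-h) * (2 - h) * (β - 1) * (1 - h + 2 * n) ^ 2 -
        (1 - h + n) * n * (α - 120 * (1 - h)) ^ 2 > 0 := by
  have hc : (1:ℝ) < 1 - h := by linarith
  have hn' : (1:ℝ) ≤ n := by exact_mod_cast hn
  have habs : 0 ≤ |α - 120 * (1 - h)| := abs_nonneg _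
  have hA : |α - 120 * (1 - h)| * (1 - h) < 860 * n := by
    nlinarith [hbig]
  have h0 : 0 ≤ |α - 120 * (1 - h)| * (1 - h) := mul_nonneg habs (by linarith)
  have hsq : (α - 120 * (1 - h)) ^ 2 * (1 - h) ^ 2 < (860 * n) ^ 2 := by
    have h1 := mul_self_lt_mul_self h0 hA
    nlinarith [sq_abs (α - 120 * (1 - h))]
  have hAsq : (α - 120 * (1 - h)) ^ 2 < 739600 * n ^ 2 := by
    nlinarith [mul_nonneg (sq_nonneg (α - 120 * (1 - h))) (show (0:ℝ) ≤ (1 - h) ^ 2 - 1 by nlinarith)]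
  have key : (1 - h + n) * n * (α - 120 * (1 - h)) ^ 2 < 739600 * n ^ 3 * (1 - h + n) := by
    nlinarith [mul_pos (show (0:ℝ) < 1 - h + n by linarith) (show (0:ℝ) < n by linarith)]
  have hnn : (0:ℝ) ≤ (n:ℝ) := by linarith
  have t1 : (0:ℝ) ≤ (1 - h) * (n:ℝ) ^ 3 := mul_nonneg (by linarith) (pow_nonneg hnn 3)
  have t2 : (0:ℝ) ≤ (n:ℝ) ^ 4 := pow_nonneg hnn 4
  have t3 : (0:ℝ) ≤ (3732456 * (1 - h) ^ 2 + 4) * (n:ℝ) ^ 2 :=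
    mul_nonneg (by nlinarith) (pow_nonneg hnn 2)
  have t4 : (0:ℝ) ≤ (746488 * (1 - h) ^ 3 + 4 * (1 - h)) * (n:ℝ) :=
    mul_nonneg (by nlinarith [pow_pos (show (0:ℝ) < 1 - h by linarith) 3]) hnn
  have t5 : (0:ℝ) ≤ 4 * (-h) * (n:ℝ) * (2 - h) * (1 - h + n) := by
    have := mul_nonneg (mul_nonneg (mul_nonneg (mul_nonneg (by norm_num : (0:ℝ) ≤ 4) (show (0:ℝ) ≤ -h by linarith)) hnn) (show (0:ℝ) ≤ 2 - h by linarith)) (show (0:ℝ) ≤ 1 - h + n by linarith)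
    linarith
  have t6 : (0:ℝ) ≤ (-h) * (2 - h) * (β - 1) * (1 - h + 2 * n) ^ 2 :=
    mul_nonneg (mul_nonneg (mul_nonneg (by linarith) (by linarith)) (by linarith)) (sq_nonneg _)
  have key2 : (1 - h + ↑n) * ↑n * (α - 120 * (1 - h)) ^ 2 <
      2985968 * (n:ℝ) ^ 4 + 5971936 * (1 - h) * (n:ℝ) ^ 3 := by nlinarith [key, t1, t2]
  linarith [key2, t3, t4, t5, t6]
end
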